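/- arXiv:0903.5528 — 3 statements merged into one kernel-verified Lean document; each statement's English description precedes it below -/
import Mathlib

section
/- Let n ≥ 3, let U ⊆ ℝ^n be open, let f : U → ℝ^{n+2} be a parabolic smooth immersion, and let g : U → ℝ^{n+1} be a smooth immersion isometric to f. Then the relative nullity spaces of f and g coincide at every point: Δ_g(x) = Δ_f(x) for all x ∈ U. -/
/-!
Differentiating the identity `⟪Df X, Df Y⟫ = ⟪Dg X, Dg Y⟫` twice gives the Gauss equation: the
forms `⟪α(X,W), α(Y,Z)⟫ - ⟪α(X,Z), α(Y,W)⟫` of the second fundamental forms `α` of `f` and `β` of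
`g` agree. Let `z = Z x`, so `α(z,z) = 0` and `z ∉ Δ_f`.

If `T ∈ Δ_f` but `T ∉ Δ_g`, the Gauss form of `β` vanishes along `T`; as `β` takes values in a
line this forces it to vanish identically, and then so does that of `α`. Testing it on
`(X, z, z, X)` gives `α(X, z) = 0` for all `X`, i.e. `z ∈ Δ_f`, a contradiction.

If `T ∈ Δ_g`, the Gauss form of `α` vanishes along `T`, which gives `α(z, T) = 0`. Choose `w` with
`α(z, w) ≠ 0`; since `Δ_f` has codimension two, `T = d + a z + b w` with `d ∈ Δ_f`, and
`α(z, T) = b α(z, w)`, `⟪α(w, z), α(w, T)⟫ = a ‖α(z, w)‖²` force `a = b = 0`.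
-/

noncomputable section

open scoped RealInnerProductSpace
open Module Set

/-- Euclidean space ℝ^k. -/
abbrev Euc (k : ℕ) : Type := EuclideanSpace ℝ (Fin k)

variable {E : Type*} [NormedAddCommGroup E] [NormedSpace ℝ E] {m : ℕ}

/-- Tangent space of an immersion at a point: range of the differential. -/
def TangentSp (f : E → Euc m) (x : E) : Submodule ℝ (Euc m) :=
  LinearMap.range (fderiv ℝ f x).toLinearMap

/-- Normal space: orthogonal complement of the tangent space. -/
def NormalSp (f : E → Euc m) (x : E) : Submodule ℝ (Euc m) := (TangentSp f x)ᗮ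

/-- Orthogonal projection of the ambient space onto the normal space. -/
def normalProj (f : E → Euc m) (x : E) : Euc m →L[ℝ] Euc m :=
  (NormalSp f x).subtypeL.comp ((NormalSp f x).orthogonalProjectionOnto)

/-- Orthogonal projection of the ambient space onto the tangent space. -/
def tangentProj (f : E → Euc m) (x : E) : Euc m →L[ℝ] Euc m :=
  (TangentSp f x).subtypeL.comp ((TangentSp f x).orthogonalProjectionOnto)

/-- The second fundamental form as a continuous linear operator in the first variable,
with second argument `Y` fixed. -/
def sffOp (f : E → Euc m) (x : E) (Y : E) : E →L[ℝ] Euc m :=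
  (normalProj f x).comp (fderiv ℝ (fun y => fderiv ℝ f y Y) x)

/-- The second fundamental form `α_f(x)(X,Y)`: normal component of the second derivative. -/
def sff (f : E → Euc m) (x : E) (X Y : E) : Euc m := sffOp f x Y X

/-- Relative nullity subspace `Δ_f(x) = {X : α_f(x)(X,Y)=0 for all Y}`. -/
def relNullity (f : E → Euc m) (x : E) : Submodule ℝ E :=
  ⨅ Y : E, LinearMap.ker (sffOp f x Y : E →ₗ[ℝ] Euc m)

/-- `f` is a smooth immersion on `U`. -/
def IsImmersionOn (f : E → Euc m) (U : Set E) : Prop :=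
  ContDiffOn ℝ (⊤ : ℕ∞) f U ∧ ∀ x ∈ U, Function.Injective (fderiv ℝ f x)

/-- `f` and `g` induce the same metric on `U`. -/
def SameMetricOn {m' : ℕ} (f : E → Euc m) (g : E → Euc m') (U : Set E) : Prop :=
  ∀ x ∈ U, ∀ X Y : E,
    ⟪fderiv ℝ f x X, fderiv ℝ f x Y⟫ = ⟪fderiv ℝ g x X, fderiv ℝ g x Y⟫

/-- First normal space: span of the values of the second fundamental form. -/
def FirstNormal (f : E → Euc m) (x : E) : Submodule ℝ (Euc m) :=
  Submodule.span ℝ {v | ∃ X Y : E, v = sff f x X Y}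

/-- `f` has rank two: the relative nullity has codimension two everywhere on `U`. -/
def HasRankTwo (f : E → Euc m) (U : Set E) : Prop :=
  ∀ x ∈ U, finrank ℝ (relNullity f x) = finrank ℝ E - 2

/-- A parabolic submanifold: rank two, first normal space equal to the normal space,
and a nowhere-vanishing smooth asymptotic vector field orthogonal to the relative nullity. -/
def IsParabolic (f : E → Euc m) (U : Set E) : Prop :=
  IsImmersionOn f U ∧ HasRankTwo f U ∧
  (∀ x ∈ U, FirstNormal f x = NormalSp f x) ∧
  ∃ Z : E → E, ContDiffOn ℝ (⊤ : ℕ∞) Z U ∧ (∀ x ∈ U, Z x ≠ 0) ∧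
    (∀ x ∈ U, ∀ T ∈ relNullity f x, ⟪fderiv ℝ f x (Z x), fderiv ℝ f x T⟫ = 0) ∧
    (∀ x ∈ U, sff f x (Z x) (Z x) = 0)

/-- `F` is ruled on `V`: there is a smooth corank-one distribution whose leaves are
mapped into affine subspaces. -/
def IsRuledOn (F : E → Euc m) (V : Set E) : Prop :=
  ∃ D : E → Submodule ℝ E,
    (∀ x ∈ V, finrank ℝ (D x) = finrank ℝ E - 1) ∧
    (∀ x ∈ V, ∃ W : Set E, IsOpen W ∧ x ∈ W ∧ W ⊆ V ∧
      ∃ v : Fin (finrank ℝ E - 1) → E → E,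
        (∀ i, ContDiffOn ℝ (⊤ : ℕ∞) (v i) W) ∧
        ∀ y ∈ W, D y = Submodule.span ℝ (Set.range fun i => v i y)) ∧
    (∀ S T : E → E, ContDiffOn ℝ (⊤ : ℕ∞) S V → ContDiffOn ℝ (⊤ : ℕ∞) T V →
      (∀ y ∈ V, S y ∈ D y) → (∀ y ∈ V, T y ∈ D y) →
      ∀ x ∈ V, fderiv ℝ (fun y => fderiv ℝ F y (T y)) x (S x) ∈
        (D x).map (fderiv ℝ F x).toLinearMap)

/-- A two-dimensional immersed surface contained in the subspace `W`. -/
def IsImmersedSurfaceIn (S : Set (Euc m)) (W : Submodule ℝ (Euc m)) : Prop :=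
  ∃ (O : Set (Euc 2)) (σ : Euc 2 → Euc m), IsOpen O ∧ ContDiffOn ℝ (⊤ : ℕ∞) σ O ∧
    (∀ x ∈ O, Function.Injective (fderiv ℝ σ x)) ∧ (∀ x ∈ O, σ x ∈ W) ∧ S = σ '' O

/-- `f` is surface-like on `V`. -/
def SurfaceLikeOn {n : ℕ} (f : Euc n → Euc m) (V : Set (Euc n)) : Prop :=
  (∃ (W : Submodule ℝ (Euc m)) (p : Euc m) (S : Set (Euc m)),
      finrank ℝ W = 4 ∧ IsImmersedSurfaceIn S W ∧
      ∀ x ∈ V, ∃ s ∈ S, ∃ w ∈ Wᗮ, f x = p + s + w)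
  ∨ (∃ (W : Submodule ℝ (Euc m)) (p : Euc m) (S : Set (Euc m)),
      finrank ℝ W = 5 ∧ IsImmersedSurfaceIn S W ∧ (∀ s ∈ S, ‖s‖ = 1) ∧
      ∀ x ∈ V, ∃ t : ℝ, 0 < t ∧ ∃ s ∈ S, ∃ w ∈ Wᗮ, f x = p + t • s + w)

/-- `f` and `g` are congruent on `U` by a rigid motion of the ambient space. -/
def CongruentOn {n : ℕ} (f g : Euc n → Euc m) (U : Set (Euc n)) : Prop :=
  ∃ (A : Euc m ≃ₗᵢ[ℝ] Euc m) (v : Euc m), ∀ x ∈ U, g x = A (f x) + v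

open Submodule in
lemma exists_eq_add_smul_add_smul_of_finrank_le {K V : Type*} [Field K] [AddCommGroup V]
    [Module K V] [FiniteDimensional K V] {Δ : Submodule K V}
    (hΔ : finrank K V ≤ finrank K Δ + 2) {z w : V} (hz : z ∉ Δ) (hw : w ∉ Δ ⊔ K ∙ z) (T : V) :
    ∃ d ∈ Δ, ∃ a b : K, T = d + a • z + b • w := by
  have hlt₁ : Δ < Δ ⊔ K ∙ z := SetLike.lt_iff_le_and_exists.2
    ⟨le_sup_left, z, mem_sup_right (mem_span_singleton_self z), hz⟩
  have hlt₂ : Δ ⊔ K ∙ z < Δ ⊔ K ∙ z ⊔ K ∙ w := SetLike.lt_iff_le_and_exists.2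
    ⟨le_sup_left, w, mem_sup_right (mem_span_singleton_self w), hw⟩
  have htop : Δ ⊔ K ∙ z ⊔ K ∙ w = ⊤ := by
    have := finrank_lt_finrank_of_lt hlt₁
    have := finrank_lt_finrank_of_lt hlt₂
    have := finrank_le (Δ ⊔ K ∙ z ⊔ K ∙ w)
    exact eq_top_of_finrank_eq (by omega)
  obtain ⟨y, hy, bw, hbw, rfl⟩ := mem_sup.1 (htop ▸ mem_top : T ∈ Δ ⊔ K ∙ z ⊔ K ∙ w)
  obtain ⟨d, hd, az, haz, rfl⟩ := mem_sup.1 hy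
  obtain ⟨a, rfl⟩ := mem_span_singleton.1 haz
  obtain ⟨b, rfl⟩ := mem_span_singleton.1 hbw
  exact ⟨d, hd, a, b, rfl⟩

lemma inner_mul_inner_self_of_mem_span_singleton {G : Type*} [NormedAddCommGroup G]
    [InnerProductSpace ℝ G] {ν u v : G} (hu : u ∈ ℝ ∙ ν) (hv : v ∈ ℝ ∙ ν) :
    ⟪u, v⟫ * ⟪ν, ν⟫ = ⟪u, ν⟫ * ⟪v, ν⟫ := by
  obtain ⟨a, rfl⟩ := Submodule.mem_span_singleton.1 hu
  obtain ⟨b, rfl⟩ := Submodule.mem_span_singleton.1 hv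
  simp only [real_inner_smul_left, real_inner_smul_right]
  ring

lemma eq_zero_of_symm_of_antisymm {V : Type*} {P : V → V → V → ℝ}
    (hsymm : ∀ a b c, P a b c = P b a c) (hanti : ∀ a b c, P a b c + P a c b = 0) (a b c : V) :
    P a b c = 0 := by
  linarith [hanti a b c, hanti b c a, hanti c a b, hsymm a b c, hsymm b c a, hsymm c a b]

section Projection

open Submodule

variable {V F₁ F₂ : Type*} [AddCommGroup V] [Module ℝ V]
  [NormedAddCommGroup F₁] [InnerProductSpace ℝ F₁]
  [NormedAddCommGroup F₂] [InnerProductSpace ℝ F₂]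

lemma inner_starProjection_orthogonal (K : Submodule ℝ F₁) [K.HasOrthogonalProjection]
    (u v : F₁) :
    ⟪Kᗮ.starProjection u, Kᗮ.starProjection v⟫ =
      ⟪u, v⟫ - ⟪K.starProjection u, K.starProjection v⟫ := by
  have hu := starProjection_inner_eq_zero u _ (K.starProjection_apply_mem v)
  have hv := starProjection_inner_eq_zero v _ (K.starProjection_apply_mem u)
  rw [starProjection_orthogonal_val, starProjection_orthogonal_val, inner_sub_left,
    inner_sub_right, inner_sub_right] at *
  linarith [real_inner_comm v (K.starProjection u),
    real_inner_comm (K.starProjection v) (K.starProjection u)]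

variable {A : V →ₗ[ℝ] F₁} {B : V →ₗ[ℝ] F₂} [(LinearMap.range A).HasOrthogonalProjection]
  [(LinearMap.range B).HasOrthogonalProjection]

lemma starProjection_range_eq_of_inner_eq (hAB : ∀ X Y, ⟪A X, A Y⟫ = ⟪B X, B Y⟫)
    {p : F₁} {q : F₂} (hpq : ∀ Y, ⟪p, A Y⟫ = ⟪q, B Y⟫) {u : V}
    (hu : (LinearMap.range A).starProjection p = A u) :
    (LinearMap.range B).starProjection q = B u := by
  refine eq_starProjection_of_mem_of_inner_eq_zero (LinearMap.mem_range_self B u) ?_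
  rintro _ ⟨Y, rfl⟩
  have h := starProjection_inner_eq_zero p (A Y) (LinearMap.mem_range_self A Y)
  rw [hu, inner_sub_left] at h
  rw [inner_sub_left, ← hpq, ← hAB, h]

lemma inner_starProjection_range_eq (hAB : ∀ X Y, ⟪A X, A Y⟫ = ⟪B X, B Y⟫) {p p' : F₁}
    {q q' : F₂} (hpq : ∀ Y, ⟪p, A Y⟫ = ⟪q, B Y⟫) (hpq' : ∀ Y, ⟪p', A Y⟫ = ⟪q', B Y⟫) :
    ⟪(LinearMap.range A).starProjection p, (LinearMap.range A).starProjection p'⟫ =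
      ⟪(LinearMap.range B).starProjection q, (LinearMap.range B).starProjection q'⟫ := by
  obtain ⟨u, hu⟩ := ((LinearMap.range A).starProjection_apply_mem p)
  obtain ⟨u', hu'⟩ := ((LinearMap.range A).starProjection_apply_mem p')
  rw [← hu, ← hu', starProjection_range_eq_of_inner_eq hAB hpq hu.symm,
    starProjection_range_eq_of_inner_eq hAB hpq' hu'.symm, hAB]

end Projection

section GaussForm

open LinearMap

variable {V F G : Type*} [AddCommGroup V] [Module ℝ V]
  [NormedAddCommGroup F] [InnerProductSpace ℝ F] [NormedAddCommGroup G] [InnerProductSpace ℝ G]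

/-- For the second fundamental form `α` of an immersion, the Gauss equation identifies this with
the curvature `⟪R(X,Y)Z, W⟫` of the induced metric. -/
def gaussForm (α : V →ₗ[ℝ] V →ₗ[ℝ] F) (X Y Z W : V) : ℝ :=
  ⟪α X W, α Y Z⟫ - ⟪α X Z, α Y W⟫

variable {α : V →ₗ[ℝ] V →ₗ[ℝ] F} {β : V →ₗ[ℝ] V →ₗ[ℝ] G}

lemma gaussForm_eq_zero_of_mem_ker {X : V} (hX : X ∈ ker α) (Y Z W : V) :
    gaussForm α X Y Z W = 0 := by
  simp [gaussForm, mem_ker.1 hX]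

lemma apply_eq_zero_of_gaussForm_eq_zero (hα : ∀ X Y, α X Y = α Y X) {X z : V}
    (hz : α z z = 0) (h : gaussForm α X z z X = 0) : α X z = 0 := by
  rw [gaussForm, hz, inner_zero_right, zero_sub, neg_eq_zero, hα z X] at h
  exact inner_self_eq_zero.1 h

lemma mem_ker_of_gaussForm_eq_zero [FiniteDimensional ℝ V] (hα : ∀ X Y, α X Y = α Y X)
    (hcodim : finrank ℝ V ≤ finrank ℝ (ker α) + 2) {z : V} (hz : z ∉ ker α) (hzz : α z z = 0)
    {T : V} (hT : ∀ Y Z W, gaussForm α T Y Z W = 0) : T ∈ ker α := by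
  obtain ⟨w, hzw⟩ : ∃ w, α z w ≠ 0 := by
    by_contra! h
    exact hz (mem_ker.2 (ext h))
  have hw : w ∉ ker α ⊔ ℝ ∙ z := by
    intro hw
    obtain ⟨d, hd, c, hc, rfl⟩ := Submodule.mem_sup.1 hw
    obtain ⟨c, rfl⟩ := Submodule.mem_span_singleton.1 hc
    apply hzw
    rw [map_add, map_smul, hα z d, mem_ker.1 hd, hzz]
    simp
  obtain ⟨d, hd, a, b, rfl⟩ := exists_eq_add_smul_add_smul_of_finrank_le hcodim hz hw T
  have hexp : ∀ Y, α (d + a • z + b • w) Y = a • α z Y + b • α w Y := fun Y => by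
    simp [mem_ker.1 hd]
  have hTz : α (d + a • z + b • w) z = 0 :=
    apply_eq_zero_of_gaussForm_eq_zero hα hzz (hT z z _)
  obtain rfl : b = 0 := by
    rw [hexp, hzz, smul_zero, zero_add, hα w z, smul_eq_zero] at hTz
    exact hTz.resolve_right hzw
  have hTw := hT w z w
  rw [gaussForm, hTz, inner_zero_left, sub_zero, hexp, zero_smul, add_zero, hα w z,
    real_inner_smul_left, mul_eq_zero] at hTw
  obtain rfl : a = 0 := hTw.resolve_right (inner_self_ne_zero.2 hzw)
  simpa using hd

lemma gaussForm_eq_zero_of_mem_span_singleton {ν : G} (hβ : ∀ X Y, β X Y ∈ ℝ ∙ ν) {T : V}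
    (hT : T ∉ ker β) (hgT : ∀ Y Z W, gaussForm β T Y Z W = 0) (X Y Z W : V) :
    gaussForm β X Y Z W = 0 := by
  obtain ⟨Y₀, hY₀⟩ : ∃ Y₀, β T Y₀ ≠ 0 := by
    by_contra! h
    exact hT (mem_ker.2 (ext h))
  set b : V → V → ℝ := fun X Y => ⟪β X Y, ν⟫
  have hb : ∀ X Y Z W, gaussForm β X Y Z W * ⟪ν, ν⟫ = b X W * b Y Z - b X Z * b Y W :=
    fun X Y Z W => by
      rw [gaussForm, sub_mul, inner_mul_inner_self_of_mem_span_singleton (hβ _ _) (hβ _ _),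
        inner_mul_inner_self_of_mem_span_singleton (hβ _ _) (hβ _ _)]
  have hν : ⟪ν, ν⟫ ≠ 0 := by
    refine inner_self_ne_zero.2 fun hν => hY₀ ?_
    simpa [hν] using hβ T Y₀
  have hk : b T Y₀ ≠ 0 := by
    intro hk
    have h := inner_mul_inner_self_of_mem_span_singleton (hβ T Y₀) (hβ T Y₀)
    rw [show ⟪β T Y₀, ν⟫ = 0 from hk, mul_zero, mul_eq_zero] at h
    exact hY₀ (inner_self_eq_zero.1 (h.resolve_right hν))
  -- the matrix `b` has a nonzero row `b T` and all `2 × 2` minors through that row vanish,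
  -- so it has rank one
  have hrow : ∀ Y Z W, b T W * b Y Z = b T Z * b Y W := fun Y Z W => by
    have h := hb T Y Z W
    rw [hgT, zero_mul] at h
    linarith
  have hminor : b X W * b Y Z - b X Z * b Y W = 0 := by
    refine (mul_eq_zero.1 (?_ : _ * b T Y₀ ^ 2 = 0)).resolve_right (pow_ne_zero 2 hk)
    linear_combination (b T Y₀ * b Y Z) * hrow X W Y₀ + (b T W * b X Y₀) * hrow Y Z Y₀
      - (b T Y₀ * b Y W) * hrow X Z Y₀ - (b T Z * b X Y₀) * hrow Y W Y₀
  exact (mul_eq_zero.1 ((hb X Y Z W).trans hminor)).resolve_right hν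

theorem ker_eq_of_gaussForm_eq [FiniteDimensional ℝ V] (hα : ∀ X Y, α X Y = α Y X)
    (hcodim : finrank ℝ V ≤ finrank ℝ (ker α) + 2) {z : V} (hz : z ∉ ker α) (hzz : α z z = 0)
    {ν : G} (hβ : ∀ X Y, β X Y ∈ ℝ ∙ ν) (hαβ : gaussForm α = gaussForm β) :
    ker β = ker α := by
  ext T
  constructor
  · intro hT
    refine mem_ker_of_gaussForm_eq_zero hα hcodim hz hzz fun Y Z W => ?_
    rw [hαβ]
    exact gaussForm_eq_zero_of_mem_ker hT Y Z W
  · intro hT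
    by_contra hTβ
    have hflat := gaussForm_eq_zero_of_mem_span_singleton hβ hTβ fun Y Z W => by
      rw [← hαβ]
      exact gaussForm_eq_zero_of_mem_ker hT Y Z W
    refine hz (mem_ker.2 (ext fun X => ?_))
    rw [hα]
    exact apply_eq_zero_of_gaussForm_eq_zero hα hzz (by rw [hαβ]; exact hflat X z z X)

end GaussForm

lemma HasFDerivAt.clm_apply_const {F G : Type*} [NormedAddCommGroup F] [NormedSpace ℝ F]
    [NormedAddCommGroup G] [NormedSpace ℝ G] {φ : E → F →L[ℝ] G} {φ' : E →L[ℝ] F →L[ℝ] G}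
    {x : E} (h : HasFDerivAt φ φ' x) (v : F) : HasFDerivAt (fun y => φ y v) (φ'.flip v) x := by
  simpa using h.clm_apply (hasFDerivAt_const v x)

lemma HasFDerivAt.inner_eq_of_eventuallyEq {F₁ F₂ : Type*} [NormedAddCommGroup F₁]
    [InnerProductSpace ℝ F₁] [NormedAddCommGroup F₂] [InnerProductSpace ℝ F₂]
    {u₁ v₁ : E → F₁} {u₂ v₂ : E → F₂} {u₁' v₁' : E →L[ℝ] F₁} {u₂' v₂' : E →L[ℝ] F₂} {x : E}
    (hu₁ : HasFDerivAt u₁ u₁' x) (hv₁ : HasFDerivAt v₁ v₁' x) (hu₂ : HasFDerivAt u₂ u₂' x)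
    (hv₂ : HasFDerivAt v₂ v₂' x)
    (h : (fun y => ⟪u₁ y, v₁ y⟫) =ᶠ[nhds x] fun y => ⟪u₂ y, v₂ y⟫) (W : E) :
    ⟪u₁ x, v₁' W⟫ + ⟪u₁' W, v₁ x⟫ = ⟪u₂ x, v₂' W⟫ + ⟪u₂' W, v₂ x⟫ := by
  have := ((hu₁.inner ℝ hv₁).congr_of_eventuallyEq h.symm).unique (hu₂.inner ℝ hv₂)
  simpa [fderivInnerCLM_apply] using congr($this W)

lemma ContDiffAt.differentiableAt_fderiv {F : Type*} [NormedAddCommGroup F] [NormedSpace ℝ F]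
    {f : E → F} {x : E} {n : WithTop ℕ∞} (hf : ContDiffAt ℝ n f x) (hn : 2 ≤ n) :
    DifferentiableAt ℝ (fderiv ℝ f) x :=
  (hf.fderiv_right (m := 1) (by simpa [one_add_one_eq_two] using hn)).differentiableAt
    one_ne_zero

section SecondFundamentalForm

variable {f : E → Euc m} {x : E}

def sffCLM (f : E → Euc m) (x : E) : E →L[ℝ] E →L[ℝ] Euc m :=
  (ContinuousLinearMap.compL ℝ E (Euc m) (Euc m) (normalProj f x)).comp
    (fderiv ℝ (fderiv ℝ f) x)

lemma sffCLM_apply (X Y : E) :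
    sffCLM f x X Y = (NormalSp f x).starProjection (fderiv ℝ (fderiv ℝ f) x X Y) :=
  rfl

lemma sffCLM_mem_normalSp (X Y : E) : sffCLM f x X Y ∈ NormalSp f x :=
  (NormalSp f x).starProjection_apply_mem _

lemma inner_sffCLM (X Y Z W : E) :
    ⟪sffCLM f x X Y, sffCLM f x Z W⟫ =
      ⟪fderiv ℝ (fderiv ℝ f) x X Y, fderiv ℝ (fderiv ℝ f) x Z W⟫ -
        ⟪(TangentSp f x).starProjection (fderiv ℝ (fderiv ℝ f) x X Y),
          (TangentSp f x).starProjection (fderiv ℝ (fderiv ℝ f) x Z W)⟫ :=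
  inner_starProjection_orthogonal _ _ _

lemma sffCLM_comm (hf : ContDiffAt ℝ 2 f x) (X Y : E) : sffCLM f x X Y = sffCLM f x Y X := by
  rw [sffCLM_apply, sffCLM_apply, hf.isSymmSndFDerivAt (by simp)]

lemma mem_relNullity {X : E} : X ∈ relNullity f x ↔ ∀ Y, sff f x X Y = 0 := by
  simp only [relNullity, Submodule.mem_iInf, LinearMap.mem_ker, ContinuousLinearMap.coe_coe, sff]

variable (hf : DifferentiableAt ℝ (fderiv ℝ f) x)
include hf

lemma sff_eq_sffCLM (X Y : E) : sff f x X Y = sffCLM f x X Y := by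
  simp [sff, sffOp, (hf.hasFDerivAt.clm_apply_const Y).fderiv, sffCLM]

lemma relNullity_eq_ker_sffCLM :
    relNullity f x = LinearMap.ker (sffCLM f x).toLinearMap₁₂ := by
  ext X
  simp only [mem_relNullity, sff_eq_sffCLM hf, LinearMap.mem_ker, LinearMap.ext_iff,
    ContinuousLinearMap.toLinearMap₁₂_apply_apply_apply, LinearMap.zero_apply]

end SecondFundamentalForm

lemma finrank_add_finrank_normalSp [FiniteDimensional ℝ E] {f : E → Euc m} {x : E}
    (hf : Function.Injective (fderiv ℝ f x)) : finrank ℝ E + finrank ℝ (NormalSp f x) = m := by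
  have h := (TangentSp f x).finrank_add_finrank_orthogonal
  rwa [TangentSp, LinearMap.finrank_range_of_inj hf, finrank_euclideanSpace_fin] at h

namespace SameMetricOn

variable {m' : ℕ} {U : Set E} {f : E → Euc m} {g : E → Euc m'} {x : E}
  (hfg : SameMetricOn f g U) (hU : IsOpen U)
include hfg hU

lemma fderiv_inner_eq (hf : DifferentiableAt ℝ (fderiv ℝ f) x)
    (hg : DifferentiableAt ℝ (fderiv ℝ g) x) (hx : x ∈ U) (W X Y : E) :
    ⟪fderiv ℝ f x X, fderiv ℝ (fderiv ℝ f) x W Y⟫ +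
        ⟪fderiv ℝ (fderiv ℝ f) x W X, fderiv ℝ f x Y⟫ =
      ⟪fderiv ℝ g x X, fderiv ℝ (fderiv ℝ g) x W Y⟫ +
        ⟪fderiv ℝ (fderiv ℝ g) x W X, fderiv ℝ g x Y⟫ := by
  have h := HasFDerivAt.inner_eq_of_eventuallyEq (hf.hasFDerivAt.clm_apply_const X)
    (hf.hasFDerivAt.clm_apply_const Y) (hg.hasFDerivAt.clm_apply_const X)
    (hg.hasFDerivAt.clm_apply_const Y)
    (Filter.eventually_of_mem (hU.mem_nhds hx) fun y hy => hfg y hy X Y) W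
  simpa using h

lemma inner_fderiv₂_fderiv_eq (hf : ContDiffAt ℝ 2 f x) (hg : ContDiffAt ℝ 2 g x) (hx : x ∈ U)
    (W X Y : E) :
    ⟪fderiv ℝ (fderiv ℝ f) x W X, fderiv ℝ f x Y⟫ =
      ⟪fderiv ℝ (fderiv ℝ g) x W X, fderiv ℝ g x Y⟫ := by
  -- Koszul's argument: the difference is symmetric in its first two and antisymmetric in its
  -- last two arguments
  refine sub_eq_zero.1 (eq_zero_of_symm_of_antisymm (P := fun a b c =>
    ⟪fderiv ℝ (fderiv ℝ f) x a b, fderiv ℝ f x c⟫ -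
      ⟪fderiv ℝ (fderiv ℝ g) x a b, fderiv ℝ g x c⟫) (fun a b c => ?_) (fun a b c => ?_) W X Y)
  · rw [hf.isSymmSndFDerivAt (by simp), hg.isSymmSndFDerivAt (by simp)]
  · have h := hfg.fderiv_inner_eq hU (hf.differentiableAt_fderiv le_rfl)
      (hg.differentiableAt_fderiv le_rfl) hx a b c
    linarith [real_inner_comm (fderiv ℝ f x b) (fderiv ℝ (fderiv ℝ f) x a c),
      real_inner_comm (fderiv ℝ g x b) (fderiv ℝ (fderiv ℝ g) x a c)]

lemma inner_starProjection_tangentSp_eq (hf : ContDiffAt ℝ 2 f x) (hg : ContDiffAt ℝ 2 g x)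
    (hx : x ∈ U) (X Y Z W : E) :
    ⟪(TangentSp f x).starProjection (fderiv ℝ (fderiv ℝ f) x X Y),
        (TangentSp f x).starProjection (fderiv ℝ (fderiv ℝ f) x Z W)⟫ =
      ⟪(TangentSp g x).starProjection (fderiv ℝ (fderiv ℝ g) x X Y),
        (TangentSp g x).starProjection (fderiv ℝ (fderiv ℝ g) x Z W)⟫ :=
  inner_starProjection_range_eq (hfg x hx) (hfg.inner_fderiv₂_fderiv_eq hU hf hg hx X Y)
    (hfg.inner_fderiv₂_fderiv_eq hU hf hg hx Z W)

lemma inner_fderiv₂_sub_eq (hf : ContDiffOn ℝ 3 f U) (hg : ContDiffOn ℝ 3 g U) (hx : x ∈ U)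
    (X Y Z W : E) :
    ⟪fderiv ℝ (fderiv ℝ f) x X W, fderiv ℝ (fderiv ℝ f) x Y Z⟫ -
        ⟪fderiv ℝ (fderiv ℝ f) x X Z, fderiv ℝ (fderiv ℝ f) x Y W⟫ =
      ⟪fderiv ℝ (fderiv ℝ g) x X W, fderiv ℝ (fderiv ℝ g) x Y Z⟫ -
        ⟪fderiv ℝ (fderiv ℝ g) x X Z, fderiv ℝ (fderiv ℝ g) x Y W⟫ := by
  have hf' := (hf.contDiffAt (hU.mem_nhds hx)).fderiv_right (m := 2) (by norm_num)
  have hg' := (hg.contDiffAt (hU.mem_nhds hx)).fderiv_right (m := 2) (by norm_num)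
  have hd (V W X Y : E) := HasFDerivAt.inner_eq_of_eventuallyEq
    (((hf'.differentiableAt_fderiv le_rfl).hasFDerivAt.clm_apply_const W).clm_apply_const X)
    ((hf'.differentiableAt (by simp)).hasFDerivAt.clm_apply_const Y)
    (((hg'.differentiableAt_fderiv le_rfl).hasFDerivAt.clm_apply_const W).clm_apply_const X)
    ((hg'.differentiableAt (by simp)).hasFDerivAt.clm_apply_const Y)
    (Filter.eventually_of_mem (hU.mem_nhds hx) fun y hy =>
      hfg.inner_fderiv₂_fderiv_eq hU (hf.contDiffAt (hU.mem_nhds hy) |>.of_le (by norm_num))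
        (hg.contDiffAt (hU.mem_nhds hy) |>.of_le (by norm_num)) hy W X Y) V
  have h₁ := hd Y X W Z
  have h₂ := hd X Y W Z
  simp only [ContinuousLinearMap.flip_apply] at h₁ h₂
  rw [hf'.isSymmSndFDerivAt (by simp) X Y, hg'.isSymmSndFDerivAt (by simp) X Y] at h₂
  linarith [real_inner_comm (fderiv ℝ (fderiv ℝ f) x Y W) (fderiv ℝ (fderiv ℝ f) x X Z),
    real_inner_comm (fderiv ℝ (fderiv ℝ g) x Y W) (fderiv ℝ (fderiv ℝ g) x X Z)]

theorem gaussForm_sffCLM_eq (hf : ContDiffOn ℝ 3 f U) (hg : ContDiffOn ℝ 3 g U) (hx : x ∈ U) :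
    gaussForm (sffCLM f x).toLinearMap₁₂ = gaussForm (sffCLM g x).toLinearMap₁₂ := by
  have hf₂ := (hf.contDiffAt (hU.mem_nhds hx)).of_le (m := 2) (by norm_num)
  have hg₂ := (hg.contDiffAt (hU.mem_nhds hx)).of_le (m := 2) (by norm_num)
  ext X Y Z W
  simp only [gaussForm, ContinuousLinearMap.toLinearMap₁₂_apply_apply_apply, inner_sffCLM]
  linarith [hfg.inner_fderiv₂_sub_eq hU hf hg hx X Y Z W,
    hfg.inner_starProjection_tangentSp_eq hU hf₂ hg₂ hx X W Y Z,
    hfg.inner_starProjection_tangentSp_eq hU hf₂ hg₂ hx X Z Y W]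

end SameMetricOn

theorem relNullity_eq_of_isometric_hypersurface_general
    {n : ℕ} (U : Set (Euc n)) (hUo : IsOpen U)
    (f : Euc n → Euc (n + 2)) (hf : IsParabolic f U)
    (g : Euc n → Euc (n + 1)) (hg : IsImmersionOn g U) (hiso : SameMetricOn f g U) :
    ∀ x ∈ U, relNullity g x = relNullity f x := by
  obtain ⟨⟨hfs, hfinj⟩, hrank, -, Z, -, hZne, hZorth, hZasymp⟩ := hf
  obtain ⟨hgs, hginj⟩ := hg
  intro x hx
  have hf₃ : ContDiffOn ℝ 3 f U := hfs.of_le (WithTop.coe_le_coe.2 le_top)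
  have hg₃ : ContDiffOn ℝ 3 g U := hgs.of_le (WithTop.coe_le_coe.2 le_top)
  have hfx := (hf₃.contDiffAt (hUo.mem_nhds hx)).of_le (m := 2) (by norm_num)
  have hgx := (hg₃.contDiffAt (hUo.mem_nhds hx)).of_le (m := 2) (by norm_num)
  have hZ : Z x ∉ relNullity f x := fun hZ =>
    hZne x hx (hfinj x hx (by simpa using inner_self_eq_zero.1 (hZorth x hx _ hZ)))
  obtain ⟨ν, hν⟩ : (NormalSp g x).IsPrincipal := by
    have := finrank_add_finrank_normalSp (hginj x hx)
    rw [← Submodule.finrank_le_one_iff_isPrincipal]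
    rw [finrank_euclideanSpace_fin] at this
    omega
  have hrankx := hrank x hx
  rw [relNullity_eq_ker_sffCLM (hfx.differentiableAt_fderiv le_rfl)] at hZ hrankx ⊢
  rw [relNullity_eq_ker_sffCLM (hgx.differentiableAt_fderiv le_rfl)]
  refine ker_eq_of_gaussForm_eq (sffCLM_comm hfx) (by omega) hZ ?_
    (fun X Y => hν ▸ sffCLM_mem_normalSp X Y) (hiso.gaussForm_sffCLM_eq hUo hf₃ hg₃ hx)
  simpa [sff_eq_sffCLM (hfx.differentiableAt_fderiv le_rfl)] using hZasymp x hx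

/-- The relative nullity spaces of a parabolic submanifold and of any
isometric hypersurface immersion coincide. -/
theorem relNullity_eq_of_isometric_hypersurface
    {n : ℕ} (hn : 3 ≤ n) (U : Set (Euc n)) (hUo : IsOpen U)
    (f : Euc n → Euc (n + 2)) (hf : IsParabolic f U)
    (g : Euc n → Euc (n + 1)) (hg : IsImmersionOn g U) (hiso : SameMetricOn f g U) :
    ∀ x ∈ U, relNullity g x = relNullity f x :=
  relNullity_eq_of_isometric_hypersurface_general U hUo f hf g hg hiso
end
end

section
/- Let a, b, c ∈ ℝ with b ≠ 0 and c ≠ 0, and let A₁ := !![a, b; b, 0] and A₂ := !![c, 0; 0, 0]. Then for (x, y) ∈ ℝ² with x² + y² = 1, the matrix x·A₁ + y·A₂ has rank ≤ 1 if and only if (x, y) = (0, 1) or (x, y) = (0, −1), and in those cases its rank equals 1. -/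
/-!
`x • A₁ + y • A₂ = !![x a + y c, x b; x b, 0]` has determinant `-(x b)²`, so it is invertible
(rank two) unless `x = 0`; then `y = ±1` and the matrix is `diag (y c, 0)`, of rank one.
-/

open Matrix

namespace Matrix

variable {K : Type*} [Field K]

theorem rank_eq_card_of_det_ne_zero {n : Type*} [Fintype n] [DecidableEq n] {M : Matrix n n K}
    (h : M.det ≠ 0) : M.rank = Fintype.card n :=
  M.rank_of_isUnit ((isUnit_iff_isUnit_det M).mpr h.isUnit)

theorem rank_fin_two_single_zero_zero {t : K} (ht : t ≠ 0) :
    (!![t, 0; 0, 0] : Matrix (Fin 2) (Fin 2) K).rank = 1 := by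
  classical
  have hdiag : (!![t, 0; 0, 0] : Matrix (Fin 2) (Fin 2) K) = diagonal ![t, 0] := by
    ext i j
    fin_cases i <;> fin_cases j <;> rfl
  rw [hdiag, rank_diagonal, Fintype.card_eq_one_iff]
  refine ⟨⟨0, by simpa using ht⟩, fun ⟨i, hi⟩ => Subtype.ext ?_⟩
  fin_cases i
  · rfl
  · simp at hi

end Matrix

/-- For the shape operators `A₁ = !![a, b; b, 0]` (`b ≠ 0`) and
`A₂ = !![c, 0; 0, 0]` (`c ≠ 0`), a unit combination `x • A₁ + y • A₂` has rank at most one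
exactly when `(x, y) = (0, ±1)`, and in those cases its rank equals one. -/
theorem rank_one_normal_direction_unique
    (a b c : ℝ) (hb : b ≠ 0) (hc : c ≠ 0) (x y : ℝ) (hxy : x ^ 2 + y ^ 2 = 1) :
    ((x • (!![a, b; b, 0] : Matrix (Fin 2) (Fin 2) ℝ) +
        y • (!![c, 0; 0, 0] : Matrix (Fin 2) (Fin 2) ℝ)).rank ≤ 1 ↔
      (x = 0 ∧ y = 1) ∨ (x = 0 ∧ y = -1)) ∧
    (((x = 0 ∧ y = 1) ∨ (x = 0 ∧ y = -1)) →
      (x • (!![a, b; b, 0] : Matrix (Fin 2) (Fin 2) ℝ) +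
        y • (!![c, 0; 0, 0] : Matrix (Fin 2) (Fin 2) ℝ)).rank = 1) := by
  have hcombination : x • (!![a, b; b, 0] : Matrix (Fin 2) (Fin 2) ℝ) + y • !![c, 0; 0, 0] =
      !![x * a + y * c, x * b; x * b, 0] := by
    simp [smul_of, of_add_of]
  have hdirection : (x = 0 ∧ y = 1) ∨ (x = 0 ∧ y = -1) ↔ x = 0 := by
    rw [← and_or_left, and_iff_left_iff_imp]
    rintro rfl
    exact sq_eq_one_iff.mp (by simpa using hxy)
  have hrank_one (hx : x = 0) :
      (!![x * a + y * c, x * b; x * b, 0] : Matrix (Fin 2) (Fin 2) ℝ).rank = 1 := by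
    subst hx
    have hy : y ≠ 0 := by
      rintro rfl
      norm_num at hxy
    simpa using rank_fin_two_single_zero_zero (mul_ne_zero hy hc)
  have hrank_two (hx : x ≠ 0) :
      (!![x * a + y * c, x * b; x * b, 0] : Matrix (Fin 2) (Fin 2) ℝ).rank = 2 := by
    refine (rank_eq_card_of_det_ne_zero ?_).trans (Fintype.card_fin 2)
    simpa [det_fin_two_of] using mul_ne_zero hx hb
  rw [hcombination, hdirection]
  refine ⟨⟨fun hle => ?_, fun hx => (hrank_one hx).le⟩, hrank_one⟩
  by_contra hx
  simp [hrank_two hx] at hle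
end

section
/- Let k ≥ 1, let C : ℝ → Matrix (Fin k) (Fin k) ℝ be continuous, and let A : ℝ → Matrix (Fin k) (Fin k) ℝ be differentiable with A'(t) = A(t)·C(t) for every t ∈ ℝ. Then the rank of A(t) is constant in t: rank A(t) = rank A(0) for all t ∈ ℝ. -/
/-!
The row vectors `x` with `x ᵥ* A t = 0` do not depend on `t`: the curve `t ↦ x ᵥ* A t` solves
the linear ODE `y' = y ᵥ* C t`, whose right-hand side is Lipschitz in `y` uniformly on compact
time intervals, so by uniqueness it vanishes identically as soon as it vanishes once. Equal left
kernels force equal ranks.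
-/

open Set Matrix

theorem LinearMap.finrank_range_eq_of_ker_eq {K V W : Type*} [DivisionRing K]
    [AddCommGroup V] [Module K V] [AddCommGroup W] [Module K W] {f g : V →ₗ[K] W}
    (h : ker f = ker g) : Module.finrank K (range f) = Module.finrank K (range g) :=
  (f.quotKerEquivRange.symm.trans <|
    (Submodule.quotEquivOfEq _ _ h).trans g.quotKerEquivRange).finrank_eq

theorem Matrix.rank_eq_of_ker_vecMulLinear_eq {m n K : Type*} [Fintype m] [Fintype n] [Field K]
    {A B : Matrix m n K} (h : LinearMap.ker A.vecMulLinear = LinearMap.ker B.vecMulLinear) :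
    A.rank = B.rank := by
  rw [← rank_transpose A, ← rank_transpose B, rank, rank, mulVecLin_transpose,
    mulVecLin_transpose]
  exact LinearMap.finrank_range_eq_of_ker_eq h

theorem eq_zero_of_hasDerivAt_clm_apply {E : Type*} [NormedAddCommGroup E] [NormedSpace ℝ E]
    {L : ℝ → E →L[ℝ] E} (hL : Continuous L) {f : ℝ → E}
    (hf : ∀ t, HasDerivAt f (L t (f t)) t) {t₀ : ℝ} (h₀ : f t₀ = 0) (t : ℝ) : f t = 0 := by
  obtain ⟨a, b, ht, ht₀⟩ : ∃ a b, t ∈ Ioo a b ∧ t₀ ∈ Ioo a b :=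
    ⟨min t t₀ - 1, max t t₀ + 1, by grind⟩
  obtain ⟨K, hK⟩ := (isCompact_Icc (a := a) (b := b) |>.image hL.nnnorm).bddAbove
  have hLip : ∀ s ∈ Ioo a b, LipschitzOnWith K (L s) univ := fun s hs =>
    ((L s).lipschitz.weaken (hK ⟨s, Ioo_subset_Icc_self hs, rfl⟩)).lipschitzOnWith
  exact ODE_solution_unique_of_mem_Ioo (g := 0) hLip ht₀ (fun s _ => ⟨hf s, mem_univ _⟩)
    (fun s _ => ⟨by simp, mem_univ _⟩) h₀ ht

theorem Matrix.hasDerivAt_vecMul {m n : Type*} [Fintype m] {A : ℝ → Matrix m n ℝ}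
    {A' : Matrix m n ℝ} {t : ℝ} (hA : ∀ i j, HasDerivAt (fun s => A s i j) (A' i j) t)
    (x : m → ℝ) : HasDerivAt (fun s => x ᵥ* A s) (x ᵥ* A') t :=
  hasDerivAt_pi.2 fun j => HasDerivAt.fun_sum fun i _ => (hA i j).const_mul (x i)

theorem vecMul_eq_zero_of_hasDerivAt_mul {m n : Type*} [Fintype m] [Fintype n]
    {A : ℝ → Matrix m n ℝ} {C : ℝ → Matrix n n ℝ} (hC : Continuous C)
    (hA : ∀ t i j, HasDerivAt (fun s => A s i j) ((A t * C t) i j) t)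
    {x : m → ℝ} {t₀ : ℝ} (h₀ : x ᵥ* A t₀ = 0) (t : ℝ) : x ᵥ* A t = 0 := by
  let L : ℝ → (n → ℝ) →L[ℝ] (n → ℝ) := fun s =>
    LinearMap.toContinuousLinearMap (C s).vecMulLinear
  have hL : Continuous L := continuous_clm_apply.2 fun y => continuous_const.matrix_vecMul hC
  refine eq_zero_of_hasDerivAt_clm_apply (f := fun s => x ᵥ* A s) hL (fun s => ?_) h₀ t
  simpa [L, vecMul_vecMul] using hasDerivAt_vecMul (hA s) x

theorem rank_constant_along_linear_ODE_general
    {k : ℕ} (C A : ℝ → Matrix (Fin k) (Fin k) ℝ)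
    (hC : ∀ i j : Fin k, Continuous fun t => C t i j)
    (hA : ∀ t : ℝ, ∀ i j : Fin k, HasDerivAt (fun s => A s i j) ((A t * C t) i j) t) :
    ∀ t : ℝ, (A t).rank = (A 0).rank := by
  have hC' : Continuous C := continuous_pi fun i => continuous_pi fun j => hC i j
  intro t
  refine rank_eq_of_ker_vecMulLinear_eq (Submodule.ext fun x => ?_)
  simp only [LinearMap.mem_ker, vecMulLinear_apply]
  exact ⟨fun h => vecMul_eq_zero_of_hasDerivAt_mul hC' hA h 0,
    fun h => vecMul_eq_zero_of_hasDerivAt_mul hC' hA h t⟩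

/-- If a matrix-valued function `A` solves the linear ODE
`A' = A * C` with continuous coefficient `C`, then the rank of `A(t)` is constant. -/
theorem rank_constant_along_linear_ODE
    {k : ℕ} (hk : 1 ≤ k) (C A : ℝ → Matrix (Fin k) (Fin k) ℝ)
    (hC : ∀ i j : Fin k, Continuous fun t => C t i j)
    (hA : ∀ t : ℝ, ∀ i j : Fin k, HasDerivAt (fun s => A s i j) ((A t * C t) i j) t) :
    ∀ t : ℝ, (A t).rank = (A 0).rank :=
  rank_constant_along_linear_ODE_general C A hC hA
end
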